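/- (Structure of the stabilizer group Γ̃.) Let n ≥ 1 and m ≥ 0 be integers. Let g ∈ GL₂(E) be of the form g = z·h where z ∈ E^× is a scalar matrix and h ∈ I_E. Then the following are equivalent: (1) there exist j₁, j₂ ∈ I_E^{2m+1} with g⁻¹·ẇ·τ(g) = j₁·ẇ·j₂ (i.e. g stabilizes the double coset I_E^{2m+1}·ẇ·I_E^{2m+1} under τ-conjugation); (2) there exist t ∈ E^×, r ∈ O_E and j ∈ I_E^{2m+1} with g = i(t,r)·j. -/

import Mathlib

/-!
In characteristic 2, `i(t, r) = P_r⁻¹ [[t, r τ(t)], [εⁿπ²ⁿ τ(r) t, τ(t)]]`, and this gives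
`ẇ τ(i(t, r)) = i(t, r) ẇ`: left multiplication by `i(t, r)` does not change `g⁻¹ ẇ τ(g)`.
Since `I_E^{2m+1}` is stable under inversion and `τ`, this proves (2) ⇒ (1).

Conversely, `r = h₀₁ / h₁₁` and `t = z (h₀₀ - r h₁₀)` write `g = z h` as `i(t, r) j` with the
first row of `j` equal to `(1, 0)`. Write `ẇ = [[0, W], [W εⁿπ²ⁿ, 0]]`. Then the `(0, 1)` and
`(1, 1)` entries of `j⁻¹ ẇ τ(j)` are `W τ(j₁₁)` and `-W j₁₀ τ(j₁₁) / j₁₁`. Because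
`v(εⁿπ²ⁿ) = 2n ≥ 1`, the same entries of `j₁ ẇ j₂` are `W` times an element of `1 + p_E^{m+1}`
and `W` times an element of `p_E^{m+1}`. Hence `j ∈ I_E^{2m+1}`.
-/

open Matrix

noncomputable section

namespace ADLV

variable {E : Type*} [Field E]

/-- `e₋(a)`, the lower unipotent matrix. -/
def em (a : E) : Matrix (Fin 2) (Fin 2) E := !![1, 0; a, 1]

/-- `e₊(a)`, the upper unipotent matrix. -/
def ep (a : E) : Matrix (Fin 2) (Fin 2) E := !![1, a; 0, 1]

/-- `e₀(c, c')`, the diagonal matrix. -/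
def e0 (c c' : E) : Matrix (Fin 2) (Fin 2) E := !![c, 0; 0, c']

/-- The congruence subgroup `I_E^r`, as a set of matrices. -/
def IEr (v : E → WithTop ℤ) (r : ℤ) : Set (Matrix (Fin 2) (Fin 2) E) :=
  {g | (((r + 1) / 2 : ℤ) : WithTop ℤ) ≤ v (g 0 0 - 1) ∧
    ((r / 2 : ℤ) : WithTop ℤ) ≤ v (g 0 1) ∧
    ((r / 2 + 1 : ℤ) : WithTop ℤ) ≤ v (g 1 0) ∧
    (((r + 1) / 2 : ℤ) : WithTop ℤ) ≤ v (g 1 1 - 1)}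

/-- The Iwahori subgroup `I_E`, as a set of matrices. -/
def IwE (v : E → WithTop ℤ) : Set (Matrix (Fin 2) (Fin 2) E) :=
  {g | v (g 0 0) = 0 ∧ (0 : WithTop ℤ) ≤ v (g 0 1) ∧
    (1 : WithTop ℤ) ≤ v (g 1 0) ∧ v (g 1 1) = 0}

/-- `P_r = 1 + εⁿ π^{2n} r τ(r)`. -/
def Pel (τ : E →+* E) (ε π : E) (n : ℤ) (r : E) : E := 1 + ε ^ n * π ^ (2 * n) * r * τ r

/-- `i(t, r) = e₊(r) e₋(εⁿ π^{2n} τ(r) P_r⁻¹) e₀(t, τ(t) P_r⁻¹)`. -/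
def imat (τ : E →+* E) (ε π : E) (n : ℤ) (t r : E) : Matrix (Fin 2) (Fin 2) E :=
  ep r * em (ε ^ n * π ^ (2 * n) * τ r * (Pel τ ε π n r)⁻¹) * e0 t (τ t * (Pel τ ε π n r)⁻¹)

/-- The element `ẇ`. -/
def wdot (ε π : E) (n : ℤ) : Matrix (Fin 2) (Fin 2) E :=
  !![0, π ^ (-n); π ^ n, 0] * e0 (ε ^ (n / 2)) (ε ^ (-((n + 1) / 2)))

/-- The element `v̇`. -/
def vdot (π : E) (n d : ℤ) : Matrix (Fin 2) (Fin 2) E :=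
  !![0, π ^ (-((d + 1) / 2 + (n + 1) / 2)); π ^ ((d + 1) / 2 + n / 2), 0]

/-- `ι(c₀ + c₁ π)`, the embedding of `E` into `Mat₂(F)` on the element `c₀ + c₁ π`, `c₀, c₁ ∈ F`. -/
def iota (Δ ϖ : E) (c₀ c₁ : E) : Matrix (Fin 2) (Fin 2) E := !![c₀ + Δ * c₁, c₁; ϖ * c₁, c₀]

section Valuation

variable {v : AddValuation E (WithTop ℤ)} {x y u : E} {k : WithTop ℤ}

lemma map_eq_zero_of_pos_map_sub_one (h : 0 < v (x - 1)) : v x = 0 := by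
  rw [← AddValuation.map_one v] at h
  simpa [AddValuation.map_one] using v.map_add_eq_of_lt_left h

lemma map_nonneg_of_le_map_sub_one (hk : 0 ≤ k) (h : k ≤ v (x - 1)) : 0 ≤ v x := by
  rw [← sub_add_cancel x 1]
  exact v.map_le_add (hk.trans h) (v.map_one).ge

lemma le_map_mul_sub_one (hk : 0 ≤ k) (hx : k ≤ v (x - 1)) (hy : k ≤ v (y - 1)) :
    k ≤ v (x * y - 1) := by
  rw [show x * y - 1 = (x - 1) * y + (y - 1) by ring]
  refine v.map_le_add ?_ hy
  rw [v.map_mul, ← add_zero k]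
  exact add_le_add hx (map_nonneg_of_le_map_sub_one hk hy)

lemma le_map_inv_mul_sub_one (hu : v u = 0) (hx : k ≤ v (x - 1)) (hu' : k ≤ v (u - 1)) :
    k ≤ v (u⁻¹ * x - 1) := by
  have hu0 : u ≠ 0 := by rintro rfl; simp at hu
  rw [show u⁻¹ * x - 1 = u⁻¹ * ((x - 1) - (u - 1)) by field_simp; ring, v.map_mul, v.map_inv,
    hu, neg_zero, zero_add]
  exact v.map_le_sub hx hu'

lemma coe_add_le_map_mul {k₁ k₂ : ℤ} (hx : (k₁ : WithTop ℤ) ≤ v x)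
    (hy : (k₂ : WithTop ℤ) ≤ v y) :
    ((k₁ + k₂ : ℤ) : WithTop ℤ) ≤ v (x * y) := by
  rw [v.map_mul, WithTop.coe_add]
  exact add_le_add hx hy

lemma map_zpow_of_eq_coe {c : ℤ} (hx : v x = c) (m : ℤ) :
    v (x ^ m) = ((m * c : ℤ) : WithTop ℤ) := by
  have hx0 : x ≠ 0 := by rintro rfl; simp at hx
  induction m using Int.induction_on with
  | zero => simp
  | succ i ih =>
    rw [zpow_add_one₀ hx0, v.map_mul, ih, hx, ← WithTop.coe_add]
    congr 1; ring
  | pred i ih =>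
    rw [zpow_sub_one₀ hx0, v.map_mul, ih, v.map_inv, hx,
      ← WithTop.LinearOrderedAddCommGroup.coe_neg, ← WithTop.coe_add]
    congr 1; ring

end Valuation

section Congruence

variable {v : AddValuation E (WithTop ℤ)} {r : ℤ} {j : Matrix (Fin 2) (Fin 2) E}

lemma map_mem_IEr {τ : E →+* E} (hv_tau : ∀ x : E, v (τ x) = v x) (hj : j ∈ IEr v r) :
    j.map τ ∈ IEr v r := by
  obtain ⟨h00, h01, h10, h11⟩ := hj
  have hsub (x : E) : τ x - 1 = τ (x - 1) := by rw [map_sub, map_one]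
  simp only [IEr, Set.mem_ofPred_eq, Matrix.map_apply, hsub, hv_tau]
  exact ⟨h00, h01, h10, h11⟩

lemma le_map_det_sub_one (hr : 0 ≤ r) (hj : j ∈ IEr v r) :
    (((r + 1) / 2 : ℤ) : WithTop ℤ) ≤ v (j.det - 1) := by
  obtain ⟨h00, h01, h10, h11⟩ := hj
  rw [Matrix.det_fin_two, sub_right_comm]
  refine v.map_le_sub (le_map_mul_sub_one (by exact_mod_cast (by omega)) h00 h11) ?_
  exact le_trans (by exact_mod_cast (by omega)) (coe_add_le_map_mul h01 h10)

lemma inv_mem_IEr (hr : 1 ≤ r) (hj : j ∈ IEr v r) : j⁻¹ ∈ IEr v r := by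
  have hδ := le_map_det_sub_one (by omega) hj
  have hδ0 : v j.det = 0 :=
    map_eq_zero_of_pos_map_sub_one (lt_of_lt_of_le (by exact_mod_cast (by omega)) hδ)
  have hδu : v j.det⁻¹ = 0 := by rw [v.map_inv, hδ0, neg_zero]
  obtain ⟨h00, h01, h10, h11⟩ := hj
  rw [Matrix.inv_def, Matrix.adjugate_fin_two, Ring.inverse_eq_inv']
  simp only [IEr, Set.mem_ofPred_eq, Matrix.smul_apply, Matrix.of_apply, Matrix.cons_val',
    Matrix.cons_val_zero, Matrix.cons_val_one, Matrix.empty_val',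
    Matrix.cons_val_fin_one, smul_eq_mul, v.map_mul, hδu, zero_add, v.map_neg]
  exact ⟨le_map_inv_mul_sub_one hδ0 h11 hδ, h01, h10, le_map_inv_mul_sub_one hδ0 h00 hδ⟩


lemma exists_mul_antidiag_mul_apply {W a : E} (ha : 1 ≤ v a) (hr : 0 ≤ r)
    {x y : Matrix (Fin 2) (Fin 2) E} (hx : x ∈ IEr v r) (hy : y ∈ IEr v r) :
    ∃ s s' : E, (x * !![0, W; W * a, 0] * y) 0 1 = W * s ∧
      (x * !![0, W; W * a, 0] * y) 1 1 = W * s' ∧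
      (((r + 1) / 2 : ℤ) : WithTop ℤ) ≤ v (s - 1) ∧
      ((r / 2 + 1 : ℤ) : WithTop ℤ) ≤ v s' := by
  obtain ⟨x00, x01, x10, x11⟩ := hx
  obtain ⟨y00, y01, y10, y11⟩ := hy
  have hk : (0 : WithTop ℤ) ≤ (((r + 1) / 2 : ℤ) : WithTop ℤ) := by
    exact_mod_cast (by omega)
  refine ⟨a * x 0 1 * y 0 1 + x 0 0 * y 1 1, a * x 1 1 * y 0 1 + x 1 0 * y 1 1, ?_, ?_, ?_, ?_⟩
  · simp only [Matrix.mul_apply, Fin.sum_univ_two, of_apply, cons_val', cons_val_zero,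
      cons_val_one, cons_val_fin_one, mul_zero, zero_add, add_zero]
    ring
  · simp only [Matrix.mul_apply, Fin.sum_univ_two, of_apply, cons_val', cons_val_zero,
      cons_val_one, cons_val_fin_one, mul_zero, zero_add, add_zero]
    ring
  · rw [add_sub_assoc]
    refine v.map_le_add (le_trans (by exact_mod_cast (by omega)) (coe_add_le_map_mul
      (coe_add_le_map_mul (k₁ := 1) (by exact_mod_cast ha) x01) y01)) ?_
    exact le_map_mul_sub_one hk x00 y11
  · refine v.map_le_add (le_trans (by exact_mod_cast (by omega)) (coe_add_le_map_mul
      (coe_add_le_map_mul (k₁ := 1) (by exact_mod_cast ha)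
        (map_nonneg_of_le_map_sub_one hk x11)) y01)) ?_
    simpa using coe_add_le_map_mul (k₂ := 0) x10
      (by exact_mod_cast map_nonneg_of_le_map_sub_one hk y11)

lemma mem_IEr_of_inv_mul_antidiag_mul_map_eq {τ : E →+* E} (hv_tau : ∀ x : E, v (τ x) = v x)
    {W a c e : E} (hW : W ≠ 0) (ha : 1 ≤ v a) (hr : 1 ≤ r) {x y : Matrix (Fin 2) (Fin 2) E}
    (hx : x ∈ IEr v r) (hy : y ∈ IEr v r)
    (h : (!![1, 0; c, e])⁻¹ * !![0, W; W * a, 0] * (!![1, 0; c, e]).map τ =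
      x * !![0, W; W * a, 0] * y) :
    !![1, 0; c, e] ∈ IEr v r := by
  obtain ⟨s, s', hxy01, hxy11, hs, hs'⟩ := exists_mul_antidiag_mul_apply ha (by omega) hx hy
  have h01 := congrFun (congrFun h 0) 1
  have h11 := congrFun (congrFun h 1) 1
  rw [hxy01] at h01
  rw [hxy11] at h11
  have he : e ≠ 0 := by
    rintro rfl
    rw [Matrix.nonsing_inv_apply_not_isUnit _ (by simp)] at h01
    have hs0 : s = 0 := by simpa [hW] using h01.symm
    rw [hs0, zero_sub, v.map_neg, v.map_one] at hs
    exact absurd hs (by exact_mod_cast (by omega))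
  have hinv : (!![1, 0; c, e])⁻¹ = !![1, 0; -(c * e⁻¹), e⁻¹] := by
    refine Matrix.inv_eq_left_inv ?_
    rw [Matrix.mul_fin_two, Matrix.one_fin_two]
    congr <;> field_simp <;> ring
  rw [hinv] at h01 h11
  simp only [Matrix.mul_apply, Fin.sum_univ_two, Matrix.map_apply, of_apply, cons_val',
    cons_val_zero, cons_val_one, cons_val_fin_one, map_zero, mul_zero, zero_mul, one_mul,
    zero_add, add_zero] at h01 h11
  have hτe : τ e = s := mul_left_cancel₀ hW h01
  have he1 : (((r + 1) / 2 : ℤ) : WithTop ℤ) ≤ v (e - 1) := by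
    rwa [← hv_tau, map_sub, map_one, hτe]
  have hve : v e = 0 :=
    map_eq_zero_of_pos_map_sub_one (lt_of_lt_of_le (by exact_mod_cast (by omega)) he1)
  have hc : c = -(s' * (e * (τ e)⁻¹)) := by
    have hτe0 : τ e ≠ 0 := (map_ne_zero τ).mpr he
    field_simp at h11 ⊢
    linear_combination -h11
  refine ⟨by simp, by simp, ?_, he1⟩
  change _ ≤ v c
  rwa [hc, v.map_neg, v.map_mul, v.map_mul, v.map_inv, hv_tau, hve, neg_zero, add_zero, add_zero]

end Congruence

lemma inv_mul_mul_map_mul_of_mul_map_eq (τ : E →+* E) {w x : Matrix (Fin 2) (Fin 2) E}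
    (y : Matrix (Fin 2) (Fin 2) E) (hx : IsUnit x.det) (hw : w * x.map τ = x * w) :
    (x * y)⁻¹ * w * (x * y).map τ = y⁻¹ * w * y.map τ := by
  rw [Matrix.mul_inv_rev, Matrix.map_mul]
  calc y⁻¹ * x⁻¹ * w * (x.map τ * y.map τ)
        = y⁻¹ * (x⁻¹ * (w * x.map τ)) * y.map τ := by simp only [Matrix.mul_assoc]
    _ = y⁻¹ * w * y.map τ := by
        rw [hw, ← Matrix.mul_assoc x⁻¹, Matrix.nonsing_inv_mul _ hx, Matrix.one_mul]

lemma inv_ep (a : E) : (ep a)⁻¹ = ep (-a) :=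
  Matrix.inv_eq_left_inv (by simp [ep, Matrix.one_fin_two])

lemma inv_em (a : E) : (em a)⁻¹ = em (-a) :=
  Matrix.inv_eq_left_inv (by simp [em, Matrix.one_fin_two])

lemma inv_e0 {c c' : E} (hc : c ≠ 0) (hc' : c' ≠ 0) : (e0 c c')⁻¹ = e0 c⁻¹ c'⁻¹ :=
  Matrix.inv_eq_left_inv (by simp [e0, Matrix.one_fin_two, hc, hc'])

section Imat

variable {τ : E →+* E} {ε π : E} {n : ℤ} {t r : E}

lemma det_imat : (imat τ ε π n t r).det = t * (τ t * (Pel τ ε π n r)⁻¹) := by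
  rw [imat, Matrix.det_mul, Matrix.det_mul]
  simp [ep, em, e0, Matrix.det_fin_two_of]

lemma isUnit_det_imat (ht : t ≠ 0) (hP : Pel τ ε π n r ≠ 0) :
    IsUnit (imat τ ε π n t r).det := by
  rw [det_imat, isUnit_iff_ne_zero]
  exact mul_ne_zero ht (mul_ne_zero ((map_ne_zero τ).mpr ht) (inv_ne_zero hP))

lemma inv_imat_mul_apply_zero (ht : t ≠ 0) (hP : Pel τ ε π n r ≠ 0)
    (M : Matrix (Fin 2) (Fin 2) E) (k : Fin 2) :
    ((imat τ ε π n t r)⁻¹ * M) 0 k = t⁻¹ * (M 0 k - r * M 1 k) := by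
  have hτt : τ t * (Pel τ ε π n r)⁻¹ ≠ 0 :=
    mul_ne_zero ((map_ne_zero τ).mpr ht) (inv_ne_zero hP)
  rw [imat, Matrix.mul_inv_rev, Matrix.mul_inv_rev, inv_e0 ht hτt, inv_ep, inv_em]
  simp [e0, em, ep, Matrix.mul_apply, Fin.sum_univ_two, sub_eq_add_neg, mul_add, mul_neg, mul_assoc]

lemma map_Pel (hττ : ∀ x : E, τ (τ x) = x)
    (hτa : τ (ε ^ n * π ^ (2 * n)) = ε ^ n * π ^ (2 * n)) (r : E) :
    τ (Pel τ ε π n r) = Pel τ ε π n r := by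
  rw [Pel, map_add, map_one, map_mul, map_mul, hτa, hττ]
  ring

lemma valuation_Pel_eq_zero {v : AddValuation E (WithTop ℤ)} (hv_tau : ∀ x : E, v (τ x) = v x)
    (ha : 0 < v (ε ^ n * π ^ (2 * n))) (hr : 0 ≤ v r) : v (Pel τ ε π n r) = 0 := by
  refine map_eq_zero_of_pos_map_sub_one ?_
  rw [Pel, add_sub_cancel_left, v.map_mul, v.map_mul, hv_tau]
  exact lt_of_lt_of_le ha (le_add_of_nonneg_right hr |>.trans (le_add_of_nonneg_right hr))

lemma exists_eq_imat_mul_of_mem_IwE {v : AddValuation E (WithTop ℤ)}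
    (hP : ∀ r, 0 ≤ v r → Pel τ ε π n r ≠ 0) {z : E} (hz : z ≠ 0)
    {h : Matrix (Fin 2) (Fin 2) E} (hh : h ∈ IwE v) :
    ∃ t r c e : E, t ≠ 0 ∧ 0 ≤ v r ∧ z • h = imat τ ε π n t r * !![1, 0; c, e] := by
  obtain ⟨hA, hB, hC, hD⟩ := hh
  have hD0 : h 1 1 ≠ 0 := by rintro h0; simp [h0] at hD
  set r := h 0 1 / h 1 1
  have hr : 0 ≤ v r := by rwa [v.map_div, hD, sub_zero]
  have hu : h 0 0 - r * h 1 0 ≠ 0 := by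
    have : v (h 0 0) < v (r * h 1 0) := by
      rw [hA, v.map_mul]
      exact lt_of_lt_of_le zero_lt_one (hC.trans (le_add_of_nonneg_left hr))
    rw [← v.ne_top_iff, v.map_sub_eq_of_lt_left this, hA]
    exact WithTop.zero_ne_top
  set t := z * (h 0 0 - r * h 1 0)
  have ht : t ≠ 0 := mul_ne_zero hz hu
  have hi := isUnit_det_imat (τ := τ) (ε := ε) (π := π) (n := n) ht (hP r hr)
  have h00 : ((imat τ ε π n t r)⁻¹ * (z • h)) 0 0 = 1 := by
    rw [inv_imat_mul_apply_zero ht (hP r hr)]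
    simp only [Matrix.smul_apply, smul_eq_mul, t]
    field_simp
  have h01 : ((imat τ ε π n t r)⁻¹ * (z • h)) 0 1 = 0 := by
    rw [inv_imat_mul_apply_zero ht (hP r hr)]
    simp only [Matrix.smul_apply, smul_eq_mul, r]
    field_simp
    ring
  set j := (imat τ ε π n t r)⁻¹ * (z • h) with hjdef
  have hj : j = !![1, 0; j 1 0, j 1 1] := by
    rw [← h00, ← h01]
    exact Matrix.eta_fin_two j
  refine ⟨t, r, j 1 0, j 1 1, ht, hr, ?_⟩
  rw [← hj, hjdef, Matrix.mul_nonsing_inv_cancel_left _ _ hi]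

variable [CharP E 2]

lemma imat_eq_smul (hP : Pel τ ε π n r ≠ 0) :
    imat τ ε π n t r =
      (Pel τ ε π n r)⁻¹ • !![t, r * τ t; ε ^ n * π ^ (2 * n) * τ r * t, τ t] := by
  have hPdef : Pel τ ε π n r = 1 + ε ^ n * π ^ (2 * n) * r * τ r := rfl
  rw [imat, ep, em, e0, Matrix.mul_fin_two, Matrix.mul_fin_two]
  ext i j
  fin_cases i <;> fin_cases j <;>
    simp only [Fin.zero_eta, Fin.mk_one, of_apply, cons_val', cons_val_zero, cons_val_one,
      cons_val_fin_one, Matrix.smul_apply, smul_eq_mul, mul_one, mul_zero, zero_add, add_zero,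
      one_mul]
  · field_simp
    linear_combination
      t * hPdef + ε ^ n * π ^ (2 * n) * r * τ r * t * CharTwo.two_eq_zero (R := E)
  all_goals ring

lemma antidiag_mul_map_imat (hττ : ∀ x : E, τ (τ x) = x)
    (hτa : τ (ε ^ n * π ^ (2 * n)) = ε ^ n * π ^ (2 * n)) (hP : Pel τ ε π n r ≠ 0)
    (W : E) :
    !![0, W; W * (ε ^ n * π ^ (2 * n)), 0] * (imat τ ε π n t r).map τ =
      imat τ ε π n t r * !![0, W; W * (ε ^ n * π ^ (2 * n)), 0] := by
  rw [imat_eq_smul hP]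
  ext i j
  fin_cases i <;> fin_cases j <;>
    simp only [Fin.zero_eta, Fin.mk_one, Matrix.mul_apply, Fin.sum_univ_two, Matrix.map_apply,
      Matrix.smul_apply, of_apply, cons_val', cons_val_zero, cons_val_one, cons_val_fin_one,
      smul_eq_mul, map_mul, map_inv₀, map_Pel hττ hτa, hτa, hττ, zero_mul, mul_zero,
      zero_add, add_zero] <;>
    ring

end Imat

lemma exists_wdot_eq_antidiag {ε π : E} (hπ : π ≠ 0) (hε : ε ≠ 0) (n : ℤ) :
    ∃ W ≠ 0, wdot ε π n = !![0, W; W * (ε ^ n * π ^ (2 * n)), 0] := by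
  refine ⟨π ^ (-n) * ε ^ (-((n + 1) / 2)),
    mul_ne_zero (zpow_ne_zero _ hπ) (zpow_ne_zero _ hε), ?_⟩
  have hprod :
      π ^ (-n) * ε ^ (-((n + 1) / 2)) * (ε ^ n * π ^ (2 * n)) = π ^ n * ε ^ (n / 2) := by
    rw [show π ^ (-n) * ε ^ (-((n + 1) / 2)) * (ε ^ n * π ^ (2 * n)) =
      π ^ (-n) * π ^ (2 * n) * (ε ^ (-((n + 1) / 2)) * ε ^ n) by ring,
      ← zpow_add₀ hπ, ← zpow_add₀ hε]
    congr 2 <;> omega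
  rw [wdot, e0, Matrix.mul_fin_two, hprod]
  simp

lemma map_one_eq_zero_of_map_mul {v : E → WithTop ℤ} (hv_top : ∀ x : E, v x = ⊤ ↔ x = 0)
    (hv_mul : ∀ x y : E, v (x * y) = v x + v y) : v 1 = 0 := by
  have h11 := hv_mul 1 1
  rw [mul_one] at h11
  lift v 1 to ℤ using (hv_top 1).not.mpr one_ne_zero with k
  norm_cast at h11 ⊢
  omega

section Uniformizer

variable {τ : E →+* E} {ε π : E}

lemma map_zpow_mul_zpow_two_mul (hττ : ∀ x : E, τ (τ x) = x) (hπ : π ≠ 0)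
    (hε : ε = τ π / π) (n : ℤ) : τ (ε ^ n * π ^ (2 * n)) = ε ^ n * π ^ (2 * n) := by
  have hε0 : ε ≠ 0 := by rw [hε]; exact div_ne_zero ((map_ne_zero τ).mpr hπ) hπ
  have hτπ : τ π = ε * π := by rw [hε, div_mul_cancel₀ _ hπ]
  have hτε : τ ε = ε⁻¹ := by rw [hε, map_div₀, hττ, inv_div]
  rw [map_mul, map_zpow₀, map_zpow₀, hτε, hτπ, _root_.inv_zpow, _root_.mul_zpow,
    ← mul_assoc, ← _root_.zpow_neg, ← zpow_add₀ hε0]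
  congr 2
  ring

lemma one_le_map_zpow_mul_zpow_two_mul {v : AddValuation E (WithTop ℤ)}
    (hv_tau : ∀ x : E, v (τ x) = v x) (hπ : v π = 1) (hε : ε = τ π / π) {n : ℤ}
    (hn : 1 ≤ n) :
    1 ≤ v (ε ^ n * π ^ (2 * n)) := by
  have hvε : v ε = ((0 : ℤ) : WithTop ℤ) := by
    rw [hε, v.map_div, hv_tau, hπ]
    rfl
  rw [v.map_mul, map_zpow_of_eq_coe hvε, map_zpow_of_eq_coe (c := 1) hπ, ← WithTop.coe_add]
  exact_mod_cast (by omega)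

end Uniformizer

theorem statement5_general [CharP E 2]
    (τ : E →+* E) (hττ : ∀ x : E, τ (τ x) = x)
    (v : E → WithTop ℤ)
    (hv_top : ∀ x : E, v x = ⊤ ↔ x = 0)
    (hv_mul : ∀ x y : E, v (x * y) = v x + v y)
    (hv_add : ∀ x y : E, min (v x) (v y) ≤ v (x + y))
    (hv_tau : ∀ x : E, v (τ x) = v x)
    (π : E) (hπ : v π = 1)
    (ε : E) (hε : ε = τ π / π)
    (n m : ℤ) (hn : 1 ≤ n) (hm : 0 ≤ m)
    (z : E) (hz : z ≠ 0) (h : Matrix (Fin 2) (Fin 2) E) (hh : h ∈ IwE v)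
    (g : Matrix (Fin 2) (Fin 2) E) (hg : g = z • h) :
    (∃ j₁ ∈ IEr v (2 * m + 1), ∃ j₂ ∈ IEr v (2 * m + 1),
        g⁻¹ * wdot ε π n * g.map ⇑τ = j₁ * wdot ε π n * j₂) ↔
      ∃ t r : E, t ≠ 0 ∧ (0 : WithTop ℤ) ≤ v r ∧
        ∃ j ∈ IEr v (2 * m + 1), g = imat τ ε π n t r * j := by
  have hv0 : v 0 = ⊤ := (hv_top 0).mpr rfl
  set V := AddValuation.of v hv0 (map_one_eq_zero_of_map_mul hv_top hv_mul) hv_add hv_mul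
  have hπ0 : π ≠ 0 := by rintro rfl; simp [hv0] at hπ
  have hε0 : ε ≠ 0 := by rw [hε]; exact div_ne_zero ((map_ne_zero τ).mpr hπ0) hπ0
  have hτa := map_zpow_mul_zpow_two_mul hττ hπ0 hε n
  have hva := one_le_map_zpow_mul_zpow_two_mul (v := V) hv_tau hπ hε hn
  have hP : ∀ r, 0 ≤ V r → Pel τ ε π n r ≠ 0 := fun r hr hP0 => by
    simpa [hP0] using valuation_Pel_eq_zero (v := V) hv_tau (zero_lt_one.trans_le hva) hr
  have hm' : 1 ≤ 2 * m + 1 := by omega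
  obtain ⟨W, hW, hw⟩ := exists_wdot_eq_antidiag hπ0 hε0 n
  rw [hw]
  constructor
  · rintro ⟨j₁, hj₁, j₂, hj₂, heq⟩
    obtain ⟨t, r, c, e, ht, hr, hzh⟩ := exists_eq_imat_mul_of_mem_IwE (v := V) hP hz hh
    rw [hg, hzh, inv_mul_mul_map_mul_of_mul_map_eq τ _ (isUnit_det_imat ht (hP r hr))
      (antidiag_mul_map_imat hττ hτa (hP r hr) W)] at heq
    exact ⟨t, r, ht, hr, _, mem_IEr_of_inv_mul_antidiag_mul_map_eq (v := V) hv_tau hW hva hm'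
      hj₁ hj₂ heq, hg.trans hzh⟩
  · rintro ⟨t, r, ht, hr, j, hj, rfl⟩
    exact ⟨j⁻¹, inv_mem_IEr (v := V) hm' hj, j.map τ, map_mem_IEr (v := V) hv_tau hj,
      inv_mul_mul_map_mul_of_mul_map_eq τ j (isUnit_det_imat ht (hP r hr))
        (antidiag_mul_map_imat hττ hτa (hP r hr) W)⟩

theorem statement5 [CharP E 2]
    (τ : E →+* E) (hττ : ∀ x : E, τ (τ x) = x) (hτne : τ ≠ RingHom.id E)
    (v : E → WithTop ℤ)
    (hv_top : ∀ x : E, v x = ⊤ ↔ x = 0)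
    (hv_mul : ∀ x y : E, v (x * y) = v x + v y)
    (hv_add : ∀ x y : E, min (v x) (v y) ≤ v (x + y))
    (hv_tau : ∀ x : E, v (τ x) = v x)
    (π : E) (hπ : v π = 1)
    (hv_even : ∀ x : E, τ x = x → ∀ k : ℤ, v x = (k : WithTop ℤ) → Even k)
    (hbasis : ∀ y : E, ∃ c₀ c₁ : E, τ c₀ = c₀ ∧ τ c₁ = c₁ ∧ y = c₀ + c₁ * π)
    (d : ℤ) (hd : 0 < d) (hdodd : Odd d)
    (ε : E) (hε : ε = τ π / π)
    (hεd : v (ε - 1) = (d : WithTop ℤ))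
    (n m : ℤ) (hn : 1 ≤ n) (hm : 0 ≤ m)
    (z : E) (hz : z ≠ 0) (h : Matrix (Fin 2) (Fin 2) E) (hh : h ∈ IwE v)
    (g : Matrix (Fin 2) (Fin 2) E) (hg : g = z • h) :
    (∃ j₁ ∈ IEr v (2 * m + 1), ∃ j₂ ∈ IEr v (2 * m + 1),
        g⁻¹ * wdot ε π n * g.map ⇑τ = j₁ * wdot ε π n * j₂) ↔
      ∃ t r : E, t ≠ 0 ∧ (0 : WithTop ℤ) ≤ v r ∧
        ∃ j ∈ IEr v (2 * m + 1), g = imat τ ε π n t r * j :=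
  statement5_general τ hττ v hv_top hv_mul hv_add hv_tau π hπ ε hε n m hn hm z hz h hh g hg

end ADLV
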